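/- arXiv:0709.4363 — 4 statements merged into one kernel-verified Lean document; each statement's English description precedes it below -/
import Mathlib

section
/- The function u(x₁,x₂) = log(x₁² + x₂²) on the half-plane model H² = {(x₁,x₂) : x₂ > 0} of the hyperbolic plane satisfies the minimal surface equation Minimal[u] = 0 for the Riemannian product H² × ℝ; explicitly, x₂² Δ₀u · (1 + x₂²|D₀u|₀²) - x₂²(x₂ u_{x₂} |D₀u|₀² + x₂² Q(u)) = 0, where Δ₀ is the Euclidean Laplacian, D₀ the Euclidean gradient, and Q(u) = u_{x₁}² u_{x₁x₁} + 2 u_{x₁}u_{x₂}u_{x₁x₂} + u_{x₂}² u_{x₂x₂}. -/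
/-- Euclidean partial derivative with respect to the first variable. -/
noncomputable def pd1 (f : ℝ → ℝ → ℝ) (x y : ℝ) : ℝ := deriv (fun t => f t y) x

/-- Euclidean partial derivative with respect to the second variable. -/
noncomputable def pd2 (f : ℝ → ℝ → ℝ) (x y : ℝ) : ℝ := deriv (fun t => f x t) y

private lemma hd_log (x y : ℝ) (h : x ^ 2 + y ^ 2 ≠ 0) :
    HasDerivAt (fun t => Real.log (t ^ 2 + y ^ 2)) (2 * x / (x ^ 2 + y ^ 2)) x := by
  have h1 : HasDerivAt (fun t : ℝ => t ^ 2 + y ^ 2) (2 * x) x := by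
    simpa using ((hasDerivAt_pow 2 x).add_const (y ^ 2))
  simpa using h1.log h

private noncomputable def u : ℝ → ℝ → ℝ := fun x₁ x₂ => Real.log (x₁ ^ 2 + x₂ ^ 2)

private lemma pd1_u (x y : ℝ) (h : x ^ 2 + y ^ 2 ≠ 0) :
    pd1 u x y = 2 * x / (x ^ 2 + y ^ 2) := (hd_log x y h).deriv

private lemma pd2_u (x y : ℝ) (h : x ^ 2 + y ^ 2 ≠ 0) :
    pd2 u x y = 2 * y / (x ^ 2 + y ^ 2) := by
  have h1 : HasDerivAt (fun t : ℝ => x ^ 2 + t ^ 2) (2 * y) y := by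
    simpa using ((hasDerivAt_pow 2 y).const_add (x ^ 2))
  have := (h1.log h).deriv
  unfold pd2 u
  rw [this]

private lemma hd_quot (a b x : ℝ) (h : a * x ^ 2 + b ≠ 0) (c d : ℝ) :
    HasDerivAt (fun t => (c * t + d) / (a * t ^ 2 + b))
      ((c * (a * x ^ 2 + b) - (c * x + d) * (2 * a * x)) / (a * x ^ 2 + b) ^ 2) x := by
  have h1 : HasDerivAt (fun t : ℝ => c * t + d) c x := by
    simpa using ((hasDerivAt_id x).const_mul c).add_const d
  have h2 : HasDerivAt (fun t : ℝ => a * t ^ 2 + b) (2 * a * x) x := by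
    have := ((hasDerivAt_pow 2 x).const_mul a).add_const b
    simpa [mul_comm, mul_assoc, mul_left_comm] using this
  exact h1.div h2 h

/-- The function u(x₁,x₂) = log(x₁²+x₂²) satisfies the minimal surface equation for
H²×ℝ on the upper half-plane:
x₂²Δ₀u(1+x₂²|D₀u|₀²) - x₂²(x₂u_{x₂}|D₀u|₀² + x₂²Q(u)) = 0. -/
theorem stmt1 :
    ∀ x y : ℝ, 0 < y →
      (fun u : ℝ → ℝ → ℝ =>
        y ^ 2 * (pd1 (pd1 u) x y + pd2 (pd2 u) x y) *
            (1 + y ^ 2 * ((pd1 u x y) ^ 2 + (pd2 u x y) ^ 2)) -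
          y ^ 2 * (y * pd2 u x y * ((pd1 u x y) ^ 2 + (pd2 u x y) ^ 2) +
            y ^ 2 * ((pd1 u x y) ^ 2 * pd1 (pd1 u) x y +
              2 * pd1 u x y * pd2 u x y * pd2 (pd1 u) x y +
              (pd2 u x y) ^ 2 * pd2 (pd2 u) x y)))
        (fun x₁ x₂ => Real.log (x₁ ^ 2 + x₂ ^ 2)) = 0 := by
  intro x y hy
  have hne : x ^ 2 + y ^ 2 ≠ 0 := by positivity
  show y ^ 2 * (pd1 (pd1 u) x y + pd2 (pd2 u) x y) *
            (1 + y ^ 2 * ((pd1 u x y) ^ 2 + (pd2 u x y) ^ 2)) -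
          y ^ 2 * (y * pd2 u x y * ((pd1 u x y) ^ 2 + (pd2 u x y) ^ 2) +
            y ^ 2 * ((pd1 u x y) ^ 2 * pd1 (pd1 u) x y +
              2 * pd1 u x y * pd2 u x y * pd2 (pd1 u) x y +
              (pd2 u x y) ^ 2 * pd2 (pd2 u) x y)) = 0
  -- first partials
  have h1 := pd1_u x y hne
  have h2 := pd2_u x y hne
  -- pd1 (pd1 u) x y
  have h11 : pd1 (pd1 u) x y = (2 * (x ^ 2 + y ^ 2) - 2 * x * (2 * x)) / (x ^ 2 + y ^ 2) ^ 2 := by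
    show deriv (fun t => pd1 u t y) x = _
    have heq : (fun t => pd1 u t y) = fun t => (2 * t + 0) / (1 * t ^ 2 + y ^ 2) := by
      funext t
      rw [pd1_u t y (by positivity)]
      ring_nf
    rw [heq]
    have := (hd_quot 1 (y ^ 2) x (by simpa using hne) 2 0).deriv
    rw [this]; ring_nf
  -- pd2 (pd1 u) x y : eventually pd1 u x t = 2x/(x²+t²)
  have h12 : pd2 (pd1 u) x y = (0 * (x ^ 2 + y ^ 2) - 2 * x * (2 * y)) / (x ^ 2 + y ^ 2) ^ 2 := by
    show deriv (fun t => pd1 u x t) y = _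
    have hev : (fun t => pd1 u x t) =ᶠ[nhds y] fun t => (0 * t + 2 * x) / (1 * t ^ 2 + x ^ 2) := by
      filter_upwards [eventually_gt_nhds hy] with t ht
      rw [pd1_u x t (by positivity)]
      ring_nf
    rw [hev.deriv_eq]
    have := (hd_quot 1 (x ^ 2) y (by positivity) 0 (2 * x)).deriv
    rw [this]; ring_nf
  have h22 : pd2 (pd2 u) x y = (2 * (x ^ 2 + y ^ 2) - 2 * y * (2 * y)) / (x ^ 2 + y ^ 2) ^ 2 := by
    show deriv (fun t => pd2 u x t) y = _
    have hev : (fun t => pd2 u x t) =ᶠ[nhds y] fun t => (2 * t + 0) / (1 * t ^ 2 + x ^ 2) := by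
      filter_upwards [eventually_gt_nhds hy] with t ht
      rw [pd2_u x t (by positivity)]
      ring_nf
    rw [hev.deriv_eq]
    have := (hd_quot 1 (x ^ 2) y (by positivity) 2 0).deriv
    rw [this]; ring_nf
  rw [h1, h2, h11, h12, h22]
  field_simp
  ring
end

section
/- The function u(x₁,x₂) = x₁/(x₁² + x₂²) on the half-plane H² satisfies the minimal surface equation for H² × ℝ: x₂² Δ₀u · (1 + x₂²|D₀u|₀²) - x₂²(x₂ u_{x₂} |D₀u|₀² + x₂² Q(u)) = 0. -/
/-!
`u = x₁/(x₁² + x₂²)` is the real part of `1/z`, so `Δ₀u = 0`, and a direct computation gives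
`|D₀u|₀² = 1/(x₁² + x₂²)²` and `Q(u) = 2x₁/(x₁² + x₂²)⁴`. The equation thus reduces to
`x₂ u_{x₂} |D₀u|₀² + x₂² Q(u) = -2x₁x₂²/(x₁² + x₂²)⁴ + 2x₁x₂²/(x₁² + x₂²)⁴ = 0`.
-/

open Filter Topology

noncomputable abbrev reInv (x₁ x₂ : ℝ) : ℝ := x₁ / (x₁ ^ 2 + x₂ ^ 2)

section

variable {x y : ℝ}

lemma eventually_sq_add_sq_ne_zero_left (h : x ^ 2 + y ^ 2 ≠ 0) :
    ∀ᶠ t in 𝓝 x, t ^ 2 + y ^ 2 ≠ 0 :=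
  (show ContinuousAt (fun t : ℝ => t ^ 2 + y ^ 2) x by fun_prop).eventually_ne h

lemma eventually_sq_add_sq_ne_zero_right (h : x ^ 2 + y ^ 2 ≠ 0) :
    ∀ᶠ t in 𝓝 y, x ^ 2 + t ^ 2 ≠ 0 :=
  (show ContinuousAt (fun t : ℝ => x ^ 2 + t ^ 2) y by fun_prop).eventually_ne h

lemma pd1_reInv (h : x ^ 2 + y ^ 2 ≠ 0) :
    pd1 reInv x y = (y ^ 2 - x ^ 2) / (x ^ 2 + y ^ 2) ^ 2 := by
  have := (hasDerivAt_id' x).fun_div ((hasDerivAt_pow 2 x).add_const (y ^ 2)) h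
  rw [pd1]
  refine this.deriv.trans ?_
  field_simp
  ring

lemma pd2_reInv (h : x ^ 2 + y ^ 2 ≠ 0) :
    pd2 reInv x y = -(2 * x * y) / (x ^ 2 + y ^ 2) ^ 2 := by
  have := (hasDerivAt_const y x).fun_div ((hasDerivAt_pow 2 y).const_add (x ^ 2)) h
  rw [pd2]
  refine this.deriv.trans ?_
  field_simp
  ring

lemma pd1_pd1_reInv (h : x ^ 2 + y ^ 2 ≠ 0) :
    pd1 (pd1 reInv) x y = (2 * x ^ 3 - 6 * x * y ^ 2) / (x ^ 2 + y ^ 2) ^ 3 := by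
  have hfun : (fun t => pd1 reInv t y) =ᶠ[𝓝 x]
      fun t => (y ^ 2 - t ^ 2) / (t ^ 2 + y ^ 2) ^ 2 := by
    filter_upwards [eventually_sq_add_sq_ne_zero_left h] with t ht using pd1_reInv ht
  have := ((hasDerivAt_pow 2 x).const_sub (y ^ 2)).fun_div
    (((hasDerivAt_pow 2 x).add_const (y ^ 2)).fun_pow 2) (pow_ne_zero 2 h)
  rw [pd1, hfun.deriv_eq]
  refine this.deriv.trans ?_
  field_simp
  ring

lemma pd2_pd1_reInv (h : x ^ 2 + y ^ 2 ≠ 0) :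
    pd2 (pd1 reInv) x y = (6 * x ^ 2 * y - 2 * y ^ 3) / (x ^ 2 + y ^ 2) ^ 3 := by
  have hfun : (fun t => pd1 reInv x t) =ᶠ[𝓝 y]
      fun t => (t ^ 2 - x ^ 2) / (x ^ 2 + t ^ 2) ^ 2 := by
    filter_upwards [eventually_sq_add_sq_ne_zero_right h] with t ht using pd1_reInv ht
  have := ((hasDerivAt_pow 2 y).sub_const (x ^ 2)).fun_div
    (((hasDerivAt_pow 2 y).const_add (x ^ 2)).fun_pow 2) (pow_ne_zero 2 h)
  rw [pd2, hfun.deriv_eq]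
  refine this.deriv.trans ?_
  field_simp
  ring

lemma pd2_pd2_reInv (h : x ^ 2 + y ^ 2 ≠ 0) :
    pd2 (pd2 reInv) x y = (6 * x * y ^ 2 - 2 * x ^ 3) / (x ^ 2 + y ^ 2) ^ 3 := by
  have hfun : (fun t => pd2 reInv x t) =ᶠ[𝓝 y]
      fun t => -(2 * x * t) / (x ^ 2 + t ^ 2) ^ 2 := by
    filter_upwards [eventually_sq_add_sq_ne_zero_right h] with t ht using pd2_reInv ht
  have := ((hasDerivAt_id' y).const_mul (2 * x)).fun_neg.fun_div
    (((hasDerivAt_pow 2 y).const_add (x ^ 2)).fun_pow 2) (pow_ne_zero 2 h)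
  rw [pd2, hfun.deriv_eq]
  refine this.deriv.trans ?_
  field_simp
  ring

lemma laplacian_reInv (h : x ^ 2 + y ^ 2 ≠ 0) :
    pd1 (pd1 reInv) x y + pd2 (pd2 reInv) x y = 0 := by
  rw [pd1_pd1_reInv h, pd2_pd2_reInv h]
  ring

lemma gradient_sq_reInv (h : x ^ 2 + y ^ 2 ≠ 0) :
    (pd1 reInv x y) ^ 2 + (pd2 reInv x y) ^ 2 = 1 / (x ^ 2 + y ^ 2) ^ 2 := by
  rw [pd1_reInv h, pd2_reInv h]
  field_simp
  ring

lemma hessian_gradient_reInv (h : x ^ 2 + y ^ 2 ≠ 0) :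
    (pd1 reInv x y) ^ 2 * pd1 (pd1 reInv) x y +
        2 * pd1 reInv x y * pd2 reInv x y * pd2 (pd1 reInv) x y +
        (pd2 reInv x y) ^ 2 * pd2 (pd2 reInv) x y = 2 * x / (x ^ 2 + y ^ 2) ^ 4 := by
  rw [pd1_reInv h, pd2_reInv h, pd1_pd1_reInv h, pd2_pd1_reInv h, pd2_pd2_reInv h]
  field_simp
  ring

end

/-- The function u(x₁,x₂) = x₁/(x₁²+x₂²) satisfies the minimal surface equation for
H²×ℝ on the upper half-plane:
x₂²Δ₀u(1+x₂²|D₀u|₀²) - x₂²(x₂u_{x₂}|D₀u|₀² + x₂²Q(u)) = 0. -/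
theorem stmt2 :
    ∀ x y : ℝ, 0 < y →
      (fun u : ℝ → ℝ → ℝ =>
        y ^ 2 * (pd1 (pd1 u) x y + pd2 (pd2 u) x y) *
            (1 + y ^ 2 * ((pd1 u x y) ^ 2 + (pd2 u x y) ^ 2)) -
          y ^ 2 * (y * pd2 u x y * ((pd1 u x y) ^ 2 + (pd2 u x y) ^ 2) +
            y ^ 2 * ((pd1 u x y) ^ 2 * pd1 (pd1 u) x y +
              2 * pd1 u x y * pd2 u x y * pd2 (pd1 u) x y +
              (pd2 u x y) ^ 2 * pd2 (pd2 u) x y)))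
        (fun x₁ x₂ => x₁ / (x₁ ^ 2 + x₂ ^ 2)) = 0 := by
  intro x y hy
  have h : x ^ 2 + y ^ 2 ≠ 0 := by positivity
  beta_reduce
  rw [laplacian_reInv h, gradient_sq_reInv h, hessian_gradient_reInv h, pd2_reInv h]
  field_simp
  ring
end

section
/- Let Σ be a maximal surface in M²×ℝ₁ and let ĝ = (1-Θ)² g be the conformal metric on Σ. Then Δ log(1-Θ) = K + Θ κ_M, and the Gaussian curvature K̂ of (Σ, ĝ) satisfies (1-Θ)² K̂ = K - Δlog(1-Θ) = -Θ κ_M. In particular, if κ_M ≥ 0 then K̂ ≥ 0. -/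
/-- For a maximal surface in M²×ℝ₁ with conformal metric ĝ = (1-Θ)²g:
Δlog(1-Θ) = K + Θκ_M and (1-Θ)²K̂ = K - Δlog(1-Θ) = -Θκ_M; in particular κ_M ≥ 0
implies K̂ ≥ 0. -/
theorem stmt17 {S : Type*} (Θ κ K Khat normA2 ngradΘ2 : S → ℝ)
    (L : (S → ℝ) → (S → ℝ))
    (hΘ : ∀ p, Θ p ≤ -1)
    (hK : ∀ p, K p = κ p * Θ p ^ 2 + (1 / 2) * normA2 p)
    (hLΘ : ∀ p, L Θ p = Θ p * (κ p * (Θ p ^ 2 - 1) + normA2 p))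
    (hgr : ∀ p, ngradΘ2 p = (1 / 2) * normA2 p * (Θ p ^ 2 - 1))
    (hchain : ∀ p, L (fun q => Real.log (1 - Θ q)) p
      = -(L Θ p) / (1 - Θ p) - ngradΘ2 p / (1 - Θ p) ^ 2)
    (hconf : ∀ p, (1 - Θ p) ^ 2 * Khat p
      = K p - L (fun q => Real.log (1 - Θ q)) p) :
    (∀ p, L (fun q => Real.log (1 - Θ q)) p = K p + Θ p * κ p) ∧
    (∀ p, (1 - Θ p) ^ 2 * Khat p = -(Θ p) * κ p) ∧
    ((∀ p, 0 ≤ κ p) → ∀ p, 0 ≤ Khat p) := by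
  have hpos : ∀ p, (0:ℝ) < 1 - Θ p := fun p => by linarith [hΘ p]
  have h1 : ∀ p, L (fun q => Real.log (1 - Θ q)) p = K p + Θ p * κ p := by
    intro p
    have hne : (1 - Θ p) ≠ 0 := ne_of_gt (hpos p)
    rw [hchain p, hLΘ p, hgr p, hK p]
    field_simp
    ring
  have h2 : ∀ p, (1 - Θ p) ^ 2 * Khat p = -(Θ p) * κ p := by
    intro p
    rw [hconf p, h1 p]; ring
  refine ⟨h1, h2, fun hκ p => ?_⟩
  have hsq : (0:ℝ) < (1 - Θ p) ^ 2 := pow_pos (hpos p) 2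
  have : 0 ≤ -(Θ p) * κ p := mul_nonneg (by linarith [hΘ p]) (hκ p)
  nlinarith [h2 p]
end

section
/- Let Σ be a spacelike surface in M²×ℝ₁ with induced metric g, and let g' be the metric induced on Σ from the Riemannian product M²×ℝ. Then for every tangent vector X: g(X,X) = |X*|² - X(h)², g'(X,X) = |X*|² + X(h)², and the conformal metric ĝ = (1-Θ)²g satisfies ĝ(X,X) ≥ |X*|² ≥ (1/2) g'(X,X). Consequently, if g' is complete then ĝ is complete. -/
open scoped RealInnerProductSpace

/-- Cauchy–Schwarz for `⟪X*, N*⟫` turns `ΘX(h) = -⟪X*, N*⟫` and `‖N*‖² = Θ² - 1` into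
`Θ² g(X, X) ≥ |X*|²`. -/
theorem norm_sq_le_sq_mul_sub_sq {E : Type*} [NormedAddCommGroup E] [InnerProductSpace ℝ E]
    {X N : E} {Θ a : ℝ} (hN : ‖N‖ ^ 2 = Θ ^ 2 - 1) (ha : Θ * a = -⟪X, N⟫) :
    ‖X‖ ^ 2 ≤ Θ ^ 2 * (‖X‖ ^ 2 - a ^ 2) := by
  have hCS : ⟪X, N⟫ ^ 2 ≤ ‖X‖ ^ 2 * ‖N‖ ^ 2 := by
    rw [← mul_pow, ← sq_abs]
    exact pow_le_pow_left₀ (abs_nonneg _) (abs_real_inner_le_norm X N) 2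
  have hsq : (Θ * a) ^ 2 = ⟪X, N⟫ ^ 2 := by rw [ha, neg_sq]
  rw [hN] at hCS
  linarith [mul_pow Θ a 2]

/-- Pointwise comparison of metrics for a spacelike surface in M²×ℝ₁: writing a tangent
vector X = X* + X(h)∂_t, with N = N* - Θ∂_t, ‖N*‖² = Θ²-1 and ΘX(h) = -⟨X*,N*⟩, one has
g(X,X) = |X*|² - X(h)², g'(X,X) = |X*|² + X(h)², and the conformal metric ĝ = (1-Θ)²g
satisfies ĝ(X,X) ≥ |X*|² ≥ (1/2)g'(X,X) (whence completeness of g' implies that of ĝ). -/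
theorem stmt18 {E : Type*} [NormedAddCommGroup E] [InnerProductSpace ℝ E]
    (Θ Xh : ℝ) (Xstar Nstar : E)
    (hΘ : Θ ≤ -1)
    (hN : ‖Nstar‖ ^ 2 = Θ ^ 2 - 1)
    (hXh : Θ * Xh = -(inner ℝ Xstar Nstar : ℝ)) :
    (1 - Θ) ^ 2 * (‖Xstar‖ ^ 2 - Xh ^ 2) ≥ ‖Xstar‖ ^ 2 ∧
      ‖Xstar‖ ^ 2 ≥ (1 / 2) * (‖Xstar‖ ^ 2 + Xh ^ 2) := by
  have hĝ := norm_sq_le_sq_mul_sub_sq hN hXh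
  have hg : 0 ≤ ‖Xstar‖ ^ 2 - Xh ^ 2 :=
    nonneg_of_mul_nonneg_right (hĝ.trans' (sq_nonneg _)) (by nlinarith)
  refine ⟨?_, by linarith⟩
  calc ‖Xstar‖ ^ 2 ≤ Θ ^ 2 * (‖Xstar‖ ^ 2 - Xh ^ 2) := hĝ
    _ ≤ (1 - Θ) ^ 2 * (‖Xstar‖ ^ 2 - Xh ^ 2) :=
      mul_le_mul_of_nonneg_right (by nlinarith) hg
end
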